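/- Let t, c ∈ R^m with ‖t‖ = 1, c ≠ 0, and let τ satisfy ⟨t, c⟩ < τ ≤ ‖c‖. Let δ ∈ [-1, 1]. Then max_{a ∈ T^d(t, δ)} ⟨a, c⟩ < τ if and only if δ > ( ⟨t,c⟩τ + √(‖c‖² - ⟨t,c⟩²)·√(‖c‖² - τ²) ) / ‖c‖². -/

import Mathlib

/-!
Write `s = ⟪t, c⟫` and `α = ⟪a, t⟫`. Splitting `a` and `c` into their components along `t` and
orthogonal to `t`, Cauchy–Schwarz on the orthogonal parts gives
`⟪a, c⟫ ≤ α s + √(1 - α²) √(‖c‖² - s²)` when `‖a‖ ≤ 1`, with equality for some `a` on every slice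
`⟪a, t⟫ = α`. Putting `α = cos φ`, `s = ‖c‖ cos θ`, `τ = ‖c‖ cos ψ` with angles in `[0, π]`
(so `ψ ≤ θ` because `s < τ`), the bound is `‖c‖ cos (φ - θ)`, which reaches `τ` iff `|φ - θ| ≤ ψ`.
Hence the largest `α` for which the bound reaches `τ` is `cos (θ - ψ)`, the threshold of the
statement, and the supremum over the dome is attained because the dome is compact.
-/

open Real Set
open scoped RealInnerProductSpace

namespace Real

lemma cos_arccos_sub_arccos {x y : ℝ} (hx₁ : -1 ≤ x) (hx₂ : x ≤ 1) (hy₁ : -1 ≤ y) (hy₂ : y ≤ 1) :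
    cos (arccos x - arccos y) = x * y + √(1 - x ^ 2) * √(1 - y ^ 2) := by
  rw [cos_sub, cos_arccos hx₁ hx₂, cos_arccos hy₁ hy₂, sin_arccos, sin_arccos]

lemma sqrt_sq_sub_sq_eq_mul {n x : ℝ} (hn : 0 < n) :
    √(n ^ 2 - x ^ 2) = n * √(1 - (x / n) ^ 2) := by
  rw [show n ^ 2 - x ^ 2 = n ^ 2 * (1 - (x / n) ^ 2) by field_simp, sqrt_mul (sq_nonneg n),
    sqrt_sq hn.le]

lemma mul_add_sqrt_mul_sqrt_eq {m n x y : ℝ} (hm : 0 < m) (hn : 0 < n) (hx : |x| ≤ m)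
    (hy : |y| ≤ n) :
    x * y + √(m ^ 2 - x ^ 2) * √(n ^ 2 - y ^ 2) =
      m * n * cos (arccos (x / m) - arccos (y / n)) := by
  have hxm : |x / m| ≤ 1 := by rwa [abs_div, abs_of_pos hm, div_le_one hm]
  have hyn : |y / n| ≤ 1 := by rwa [abs_div, abs_of_pos hn, div_le_one hn]
  rw [cos_arccos_sub_arccos (abs_le.1 hxm).1 (abs_le.1 hxm).2 (abs_le.1 hyn).1 (abs_le.1 hyn).2,
    sqrt_sq_sub_sq_eq_mul hm, sqrt_sq_sub_sq_eq_mul hn]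
  field_simp

lemma cos_le_cos_sub_of_cos_le_cos_sub {φ θ ψ : ℝ} (hφ₀ : 0 ≤ φ) (hφπ : φ ≤ π) (hψ₀ : 0 ≤ ψ)
    (hψθ : ψ ≤ θ) (hθπ : θ ≤ π) (h : cos ψ ≤ cos (φ - θ)) : cos φ ≤ cos (θ - ψ) := by
  have hdist : |φ - θ| ≤ ψ := by
    rw [← cos_abs (φ - θ)] at h
    refine (strictAntiOn_cos.le_iff_ge ⟨hψ₀, hψθ.trans hθπ⟩ ⟨abs_nonneg _, ?_⟩).1 h
    exact abs_le.2 ⟨by linarith, by linarith⟩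
  exact cos_le_cos_of_nonneg_of_le_pi (by linarith) hφπ (by linarith [neg_abs_le (φ - θ)])

end Real

section InnerProductSpace

variable {E : Type*} [NormedAddCommGroup E] [InnerProductSpace ℝ E] {t : E}

lemma inner_sub_inner_smul_self_right (ht : ‖t‖ = 1) (x : E) : ⟪t, x - ⟪t, x⟫ • t⟫ = 0 := by
  rw [inner_sub_right, real_inner_smul_right, real_inner_self_eq_norm_sq, ht]
  ring

lemma norm_sub_inner_smul_self (ht : ‖t‖ = 1) (x : E) :
    ‖x - ⟪t, x⟫ • t‖ = √(‖x‖ ^ 2 - ⟪t, x⟫ ^ 2) := by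
  rw [← sqrt_sq (norm_nonneg _), norm_sub_sq_real, real_inner_smul_right, norm_smul, ht,
    real_inner_comm, norm_eq_abs, mul_one, sq_abs]
  ring_nf

lemma inner_eq_mul_add_inner_sub (ht : ‖t‖ = 1) (a c : E) :
    ⟪a, c⟫ = ⟪a, t⟫ * ⟪t, c⟫ + ⟪a - ⟪t, a⟫ • t, c - ⟪t, c⟫ • t⟫ := by
  rw [inner_sub_left, real_inner_smul_left, inner_sub_inner_smul_self_right ht, inner_sub_right,
    real_inner_smul_right]
  ring

lemma inner_le_of_norm_le_one (ht : ‖t‖ = 1) {a : E} (ha : ‖a‖ ≤ 1) (c : E) :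
    ⟪a, c⟫ ≤ ⟪a, t⟫ * ⟪t, c⟫ + √(1 - ⟪a, t⟫ ^ 2) * √(‖c‖ ^ 2 - ⟪t, c⟫ ^ 2) := by
  have hperp : ‖a - ⟪t, a⟫ • t‖ ≤ √(1 - ⟪a, t⟫ ^ 2) := by
    rw [norm_sub_inner_smul_self ht, real_inner_comm]
    gcongr
    exact pow_le_one₀ (norm_nonneg a) ha
  calc ⟪a, c⟫ = ⟪a, t⟫ * ⟪t, c⟫ + ⟪a - ⟪t, a⟫ • t, c - ⟪t, c⟫ • t⟫ :=
        inner_eq_mul_add_inner_sub ht a c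
    _ ≤ ⟪a, t⟫ * ⟪t, c⟫ + ‖a - ⟪t, a⟫ • t‖ * ‖c - ⟪t, c⟫ • t‖ := by
        gcongr; exact real_inner_le_norm _ _
    _ ≤ _ := by
        rw [norm_sub_inner_smul_self ht c]
        gcongr

lemma exists_norm_le_one_inner_eq (ht : ‖t‖ = 1) {α : ℝ} (hα : α ∈ Icc (-1 : ℝ) 1) (c : E) :
    ∃ a : E, ⟪a, t⟫ = α ∧ ‖a‖ ≤ 1 ∧
      ⟪a, c⟫ = α * ⟪t, c⟫ + √(1 - α ^ 2) * √(‖c‖ ^ 2 - ⟪t, c⟫ ^ 2) := by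
  set w := c - ⟪t, c⟫ • t
  -- if `c` is parallel to `t` then `u = 0`, which still works since then `‖c‖² = ⟪t, c⟫²`
  set u := ‖w‖⁻¹ • w
  have hut : ⟪u, t⟫ = 0 := by
    rw [real_inner_smul_left, real_inner_comm, inner_sub_inner_smul_self_right ht, mul_zero]
  have hu : ‖u‖ ≤ 1 := mem_closedBall_zero_iff.1 (inv_norm_smul_mem_unitClosedBall w)
  have huc : ⟪u, c⟫ = ‖w‖ := by
    have hc : c = w + ⟪t, c⟫ • t := (sub_add_cancel _ _).symm
    rw [hc, inner_add_right, real_inner_smul_right, hut, real_inner_smul_left,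
      real_inner_self_eq_norm_sq, sq, ← mul_assoc, inv_mul_mul_self]
    ring
  have hα2 : α ^ 2 ≤ 1 := (sq_le_one_iff_abs_le_one α).2 (abs_le.2 hα)
  refine ⟨α • t + √(1 - α ^ 2) • u, ?_, ?_, ?_⟩
  · rw [inner_add_left, real_inner_smul_left, real_inner_smul_left, hut,
      real_inner_self_eq_norm_sq, ht]
    ring
  · have hperp : ⟪α • t, √(1 - α ^ 2) • u⟫ = 0 := by
      rw [real_inner_smul_left, real_inner_smul_right, real_inner_comm, hut, mul_zero, mul_zero]
    have hβ : √(1 - α ^ 2) ^ 2 = 1 - α ^ 2 := sq_sqrt (by linarith)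
    refine (sq_le_one_iff₀ (norm_nonneg _)).1 ?_
    rw [sq, norm_add_sq_eq_norm_sq_add_norm_sq_real hperp, norm_smul, norm_smul, ht,
      norm_eq_abs, norm_eq_abs, abs_of_nonneg (sqrt_nonneg _)]
    have hu2 : ‖u‖ * ‖u‖ ≤ 1 := mul_le_one₀ hu (norm_nonneg u) hu
    nlinarith [abs_mul_abs_self α, mul_le_mul_of_nonneg_left hu2 (sq_nonneg √(1 - α ^ 2))]
  · rw [inner_add_left, real_inner_smul_left, real_inner_smul_left, huc,
      norm_sub_inner_smul_self ht]

theorem exists_dome_le_inner_iff (ht : ‖t‖ = 1) {c : E} {τ : ℝ} (hτ₁ : ⟪t, c⟫ < τ)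
    (hτ₂ : τ ≤ ‖c‖) (δ : ℝ) :
    (∃ a : E, δ ≤ ⟪a, t⟫ ∧ ‖a‖ ≤ 1 ∧ τ ≤ ⟪a, c⟫) ↔
      δ ≤ (⟪t, c⟫ * τ + √(‖c‖ ^ 2 - ⟪t, c⟫ ^ 2) * √(‖c‖ ^ 2 - τ ^ 2)) / ‖c‖ ^ 2 := by
  have hs : |⟪t, c⟫| ≤ ‖c‖ := by simpa [ht] using abs_real_inner_le_norm t c
  have hn : 0 < ‖c‖ := by linarith [(abs_le.1 hs).1]
  have hτ : |τ| ≤ ‖c‖ := abs_le.2 ⟨by linarith [(abs_le.1 hs).1], hτ₂⟩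
  rw [mul_add_sqrt_mul_sqrt_eq hn hn hs hτ, ← sq, mul_div_cancel_left₀ _ (pow_ne_zero 2 hn.ne')]
  set θ := arccos (⟪t, c⟫ / ‖c‖)
  set ψ := arccos (τ / ‖c‖)
  have hψθ : ψ ≤ θ := arccos_le_arccos (div_le_div_of_nonneg_right hτ₁.le hn.le)
  have hcosψ : cos ψ = τ / ‖c‖ :=
    cos_arccos ((le_div_iff₀ hn).2 (by linarith [(abs_le.1 hτ).1])) ((div_le_one hn).2 hτ₂)
  have hbound : ∀ α : ℝ, |α| ≤ 1 →
      α * ⟪t, c⟫ + √(1 - α ^ 2) * √(‖c‖ ^ 2 - ⟪t, c⟫ ^ 2) = ‖c‖ * cos (arccos α - θ) := by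
    intro α hα
    simpa using mul_add_sqrt_mul_sqrt_eq one_pos hn hα hs
  constructor
  · rintro ⟨a, hδa, ha, hτa⟩
    have hα : |⟪a, t⟫| ≤ 1 := by
      simpa [ht] using (abs_real_inner_le_norm a t).trans (by rwa [ht, mul_one])
    have hcos : cos ψ ≤ cos (arccos ⟪a, t⟫ - θ) := by
      rw [hcosψ, div_le_iff₀' hn, ← hbound _ hα]
      exact hτa.trans (inner_le_of_norm_le_one ht ha c)
    have hαθψ := cos_le_cos_sub_of_cos_le_cos_sub (arccos_nonneg _) (arccos_le_pi _)
      (arccos_nonneg _) hψθ (arccos_le_pi _) hcos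
    rw [cos_arccos (abs_le.1 hα).1 (abs_le.1 hα).2] at hαθψ
    exact hδa.trans hαθψ
  · intro hδ
    have hα : cos (θ - ψ) ∈ Icc (-1 : ℝ) 1 := ⟨neg_one_le_cos _, cos_le_one _⟩
    obtain ⟨a, hat, ha, hac⟩ := exists_norm_le_one_inner_eq ht hα c
    refine ⟨a, hat ▸ hδ, ha, ?_⟩
    rw [hac, hbound _ (abs_le.2 hα), arccos_cos (sub_nonneg.2 hψθ)
      (by linarith [arccos_nonneg (τ / ‖c‖), arccos_le_pi (⟪t, c⟫ / ‖c‖)]),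
      sub_sub_cancel_left, cos_neg, hcosψ, mul_div_cancel₀ _ hn.ne']

end InnerProductSpace

lemma isCompact_dome {E : Type*} [NormedAddCommGroup E] [InnerProductSpace ℝ E] [ProperSpace E]
    (t : E) (δ : ℝ) : IsCompact {a : E | δ ≤ ⟪a, t⟫ ∧ ‖a‖ ≤ 1} := by
  refine (isCompact_closedBall (0 : E) 1).of_isClosed_subset ?_ fun a ha ↦ by simpa using ha.2
  exact (isClosed_le (g := fun a : E ↦ ⟪a, t⟫) continuous_const (by fun_prop)).inter
    (isClosed_le (f := fun a : E ↦ ‖a‖) (by fun_prop) continuous_const)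

theorem joint_dome_test_general (m : ℕ) (t c : EuclideanSpace ℝ (Fin m)) (τ δ : ℝ)
    (ht : ‖t‖ = 1) (hτ₁ : (inner ℝ t c : ℝ) < τ) (hτ₂ : τ ≤ ‖c‖)
    (hδ : δ ∈ Set.Icc (-1 : ℝ) 1) :
    sSup ((fun a => (inner ℝ a c : ℝ)) ''
        {a : EuclideanSpace ℝ (Fin m) | δ ≤ (inner ℝ a t : ℝ) ∧ ‖a‖ ≤ 1}) < τ ↔
      δ > ((inner ℝ t c : ℝ) * τ +
        Real.sqrt (‖c‖ ^ 2 - (inner ℝ t c : ℝ) ^ 2) * Real.sqrt (‖c‖ ^ 2 - τ ^ 2)) / ‖c‖ ^ 2 := by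
  have ht_mem : t ∈ {a | δ ≤ ⟪a, t⟫ ∧ ‖a‖ ≤ 1} := by simpa [ht] using hδ.2
  rw [(isCompact_dome t δ).sSup_lt_iff_of_continuous ⟨t, ht_mem⟩ (f := fun a ↦ ⟪a, c⟫)
    (by fun_prop), gt_iff_lt, ← not_le, ← exists_dome_le_inner_iff ht hτ₁ hτ₂]
  simp only [mem_ofPred_eq, and_imp, not_exists, not_and, not_le]

theorem joint_dome_test (m : ℕ) (t c : EuclideanSpace ℝ (Fin m)) (τ δ : ℝ)
    (ht : ‖t‖ = 1) (hc : c ≠ 0) (hτ₁ : (inner ℝ t c : ℝ) < τ) (hτ₂ : τ ≤ ‖c‖)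
    (hδ : δ ∈ Set.Icc (-1 : ℝ) 1) :
    sSup ((fun a => (inner ℝ a c : ℝ)) ''
        {a : EuclideanSpace ℝ (Fin m) | δ ≤ (inner ℝ a t : ℝ) ∧ ‖a‖ ≤ 1}) < τ ↔
      δ > ((inner ℝ t c : ℝ) * τ +
        Real.sqrt (‖c‖ ^ 2 - (inner ℝ t c : ℝ) ^ 2) * Real.sqrt (‖c‖ ^ 2 - τ ^ 2)) / ‖c‖ ^ 2 :=
  joint_dome_test_general m t c τ δ ht hτ₁ hτ₂ hδ
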